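/- Consider n agents with additive objective valuations over M = G ∪ C in which all chores are valued identically and every chore has strictly negative value (v_i(c) = v_j(c) < 0 for all agents i, j and every chore c ∈ C). For an allocation X, let key(X) be the list of the n triples (v_i(X_i), |X_i|, i) ∈ ℤ × ℕ × ℕ sorted in increasing lexicographic order, and write A ≺⁺ B if key(A) is strictly smaller than key(B) in the lexicographic order on lists of triples. Then every allocation A that is ≺⁺-maximal (i.e., there is no allocation B with A ≺⁺ B) is EQx; equivalently, if an allocation A is not EQx, then there exists an allocation B with A ≺⁺ B. -/

import Mathlib

/-! If `A` is not EQx, there are agents `i ≠ j` and an item whose transfer repairs the violation: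
a good moves from `j` to `i`, or a chore from `i` to `j`. In either case `i`'s triple was
strictly below `j`'s, and after the transfer both agents' triples lie strictly above `i`'s old
one, while every other triple is unchanged. The sorted keys therefore agree on all entries up to
`i`'s old triple, at which point the new key is larger. Giving away a chore raises the value
because chores are strictly negative, and receiving a good of value zero still raises the
bundle size, the second component of the triple. -/

/-- An allocation: pairwise disjoint bundles covering all the items. -/
def IsAllocation {ι : Type*} {n : ℕ} (A : Fin n → Finset ι) : Prop :=
  (∀ i j : Fin n, i ≠ j → Disjoint (A i) (A j)) ∧ ∀ x : ι, ∃ i : Fin n, x ∈ A i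

/-- EQx for additive objective valuations, where `G` is the set of goods and `C` the set of
chores: for all agents `i, j`, removing any good from `A j` brings `j`'s value down to at most
`i`'s value, and removing any chore from `A i` raises `i`'s value to at least `j`'s value. -/
def IsEQxObj {ι : Type*} [DecidableEq ι] {n : ℕ} (G C : Finset ι) (v : Fin n → ι → ℤ)
    (A : Fin n → Finset ι) : Prop :=
  ∀ i j : Fin n,
    (∀ g ∈ A j ∩ G, (∑ x ∈ A j, v j x) - v j g ≤ ∑ x ∈ A i, v i x) ∧
    (∀ c ∈ A i ∩ C, (∑ x ∈ A i, v i x) - v i c ≥ ∑ x ∈ A j, v j x)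

/-- The leximin++ key of an allocation: the list of triples `(value, bundle size, index)`,
one per agent, sorted in increasing lexicographic order. -/
def key {ι : Type*} {n : ℕ} (v : Fin n → ι → ℤ) (A : Fin n → Finset ι) :
    List (ℤ ×ₗ ℕ ×ₗ ℕ) :=
  ((List.finRange n).map
      (fun i => toLex ((∑ x ∈ A i, v i x), toLex (((A i).card), (i : ℕ))))).mergeSort
    (fun a b => decide (a ≤ b))

namespace List

variable {T : Type*} [LinearOrder T]

theorem Pairwise.filter_le_append_filter_not_le {u : List T} (hu : u.Pairwise (· ≤ ·))
    (a : T) : u.filter (· ≤ a) ++ u.filter (fun x => !(x ≤ a)) = u := by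
  refine (filter_append_perm _ u).eq_of_pairwise' ?_ hu
  refine pairwise_append.2 ⟨hu.filter _, hu.filter _, fun x hx y hy => ?_⟩
  simp only [mem_filter, decide_eq_true_eq, Bool.not_eq_true', decide_eq_false_iff_not]
    at hx hy
  exact hx.2.trans (le_of_not_ge hy.2)

theorem Pairwise.lex_lt_of_perm_filter_le {u w : List T} (hu : u.Pairwise (· ≤ ·))
    (hw : w.Pairwise (· ≤ ·)) {a b : T} (hperm : u.filter (· ≤ a) ~ a :: w.filter (· ≤ a))
    (hb : b ∈ w) (hab : a < b) : Lex (· < ·) u w := by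
  -- `u = F ++ a :: _` and `w = F ++ c :: _` with `a < c`
  set F := w.filter (· ≤ a)
  have hF : u.filter (· ≤ a) = F ++ [a] := by
    refine (hperm.trans (perm_append_singleton a F).symm).eq_of_pairwise' (hu.filter _) ?_
    refine pairwise_append.2 ⟨hw.filter _, pairwise_singleton _ a, fun x hx y hy => ?_⟩
    rw [mem_singleton.1 hy]
    simpa using (mem_filter.1 hx).2
  obtain ⟨c, t, hct⟩ : ∃ c t, w.filter (fun x => !(x ≤ a)) = c :: t :=
    exists_cons_of_ne_nil (ne_nil_of_mem (mem_filter.2 ⟨hb, by simpa using hab⟩))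
  have hac : a < c := by
    have hc := (mem_filter.1 (hct ▸ mem_cons_self : c ∈ w.filter _)).2
    simpa using hc
  rw [← hu.filter_le_append_filter_not_le a, ← hw.filter_le_append_filter_not_le a, hF, hct,
    append_assoc, singleton_append]
  exact Lex.append_left _ (Lex.rel hac) F

theorem lex_mergeSort_lt_of_perm {l l' r : List T} {a b a' b' : T} (hl : l ~ a :: b :: r)
    (hl' : l' ~ a' :: b' :: r) (hab : a < b) (haa' : a < a') (hab' : a < b') :
    Lex (· < ·) (l.mergeSort (· ≤ ·)) (l'.mergeSort (· ≤ ·)) := by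
  have hgt : ∀ x, a < x → (x ≤ a) = False := fun x hx => eq_false (not_le_of_gt hx)
  refine (pairwise_mergeSort' _ l).lex_lt_of_perm_filter_le (pairwise_mergeSort' _ l') (a := a)
    ?_ ((mergeSort_perm l' _).symm.subset (hl'.symm.subset mem_cons_self)) haa'
  refine (((mergeSort_perm l _).trans hl).filter _).trans
    (.trans ?_ ((((mergeSort_perm l' _).trans hl').filter _).symm.cons a))
  simp [hgt b hab, hgt a' haa', hgt b' hab']

theorem lex_mergeSort_map_lt {α : Type*} [DecidableEq α] {l : List α} (hl : l.Nodup)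
    {p q : α} (hp : p ∈ l) (hq : q ∈ l) (hpq : p ≠ q) {f g : α → T}
    (hfg : ∀ k, k ≠ p → k ≠ q → g k = f k) (hfpq : f p < f q) (hgp : f p < g p)
    (hgq : f p < g q) :
    Lex (· < ·) ((l.map f).mergeSort (· ≤ ·)) ((l.map g).mergeSort (· ≤ ·)) := by
  set r := (l.erase p).erase q
  have hperm : l ~ p :: q :: r :=
    (perm_cons_erase hp).trans ((perm_cons_erase ((mem_erase_of_ne hpq.symm).2 hq)).cons p)
  have hr : r.map g = r.map f := by
    refine map_congr_left fun k hk => hfg k ?_ ?_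
    · exact ((hl.mem_erase_iff.1 ((hl.erase p).mem_erase_iff.1 hk).2).1)
    · exact ((hl.erase p).mem_erase_iff.1 hk).1
  refine lex_mergeSort_lt_of_perm (r := r.map f) (hperm.map f) ?_ hfpq hgp hgq
  simpa only [map_cons, hr] using hperm.map g

end List

section Allocation

variable {ι : Type*} {n : ℕ}

theorem isAllocation_iff_existsUnique (A : Fin n → Finset ι) :
    IsAllocation A ↔ ∀ x, ∃! i, x ∈ A i := by
  refine ⟨fun hA x => ?_, fun h => ⟨fun i j hij => ?_, fun x => (h x).exists⟩⟩
  · obtain ⟨i, hi⟩ := hA.2 x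
    refine ⟨i, hi, fun j hj => ?_⟩
    by_contra hji
    exact Finset.disjoint_left.1 (hA.1 j i hji) hj hi
  · exact Finset.disjoint_left.2 fun x hxi hxj => hij ((h x).unique hxi hxj)

theorem IsAllocation.eq_of_mem {A : Fin n → Finset ι} (hA : IsAllocation A) {x : ι}
    {i j : Fin n} (hi : x ∈ A i) (hj : x ∈ A j) : i = j :=
  ((isAllocation_iff_existsUnique A).1 hA x).unique hi hj

variable [DecidableEq ι]

def moveItem {κ : Type*} [DecidableEq κ] (A : κ → Finset ι) (y : ι) (t : κ) :
    κ → Finset ι :=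
  fun k => if k = t then insert y (A t) else (A k).erase y

section MoveItem

variable {κ : Type*} [DecidableEq κ] (A : κ → Finset ι) (y : ι) (t : κ)

@[simp]
theorem moveItem_self : moveItem A y t t = insert y (A t) := if_pos rfl

theorem moveItem_of_ne {k : κ} (hk : k ≠ t) : moveItem A y t k = (A k).erase y := if_neg hk

theorem mem_moveItem {x : ι} {k : κ} :
    x ∈ moveItem A y t k ↔ if x = y then k = t else x ∈ A k := by
  unfold moveItem
  split_ifs <;> simp_all

end MoveItem

theorem isAllocation_moveItem {A : Fin n → Finset ι} (hA : IsAllocation A) (y : ι)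
    (t : Fin n) : IsAllocation (moveItem A y t) := by
  rw [isAllocation_iff_existsUnique] at hA ⊢
  intro x
  simp only [mem_moveItem]
  split_ifs
  · exact existsUnique_eq
  · exact hA x

theorem IsAllocation.moveItem_apply_of_ne {A : Fin n → Finset ι} (hA : IsAllocation A)
    {y : ι} {s : Fin n} (hy : y ∈ A s) (t : Fin n) {k : Fin n} (hks : k ≠ s) (hkt : k ≠ t) :
    moveItem A y t k = A k := by
  rw [moveItem_of_ne A y t hkt]
  exact Finset.erase_eq_of_notMem fun hyk => hks (hA.eq_of_mem hyk hy)

end Allocation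

section Key

variable {ι : Type*} {n : ℕ} {v : Fin n → ι → ℤ} {A B : Fin n → Finset ι}

def keyEntry (v : Fin n → ι → ℤ) (A : Fin n → Finset ι) (k : Fin n) :
    ℤ ×ₗ ℕ ×ₗ ℕ :=
  toLex (∑ x ∈ A k, v k x, toLex ((A k).card, (k : ℕ)))

theorem key_lt_key_of_keyEntry_lt {p q : Fin n} (hpq : p ≠ q)
    (hB : ∀ k, k ≠ p → k ≠ q → B k = A k) (hAq : keyEntry v A p < keyEntry v A q)
    (hBp : keyEntry v A p < keyEntry v B p)
    (hBq : keyEntry v A p < keyEntry v B q) : List.Lex (· < ·) (key v A) (key v B) :=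
  List.lex_mergeSort_map_lt (List.nodup_finRange n) (List.mem_finRange p) (List.mem_finRange q)
    hpq (fun k hkp hkq => by simp only [hB k hkp hkq]) hAq hBp hBq

theorem keyEntry_lt_of_sum_lt {p q : Fin n} (h : ∑ x ∈ A p, v p x < ∑ x ∈ B q, v q x) :
    keyEntry v A p < keyEntry v B q :=
  Prod.Lex.toLex_lt_toLex.2 (Or.inl h)

theorem keyEntry_lt_of_insert [DecidableEq ι] {k : Fin n} {y : ι} (hy : y ∉ A k)
    (hv : 0 ≤ v k y) (hB : B k = insert y (A k)) : keyEntry v A k < keyEntry v B k := by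
  have hsum : ∑ x ∈ B k, v k x = v k y + ∑ x ∈ A k, v k x := by
    rw [hB, Finset.sum_insert hy]
  rcases hv.lt_or_eq with hpos | hzero
  · exact keyEntry_lt_of_sum_lt (by omega)
  · refine Prod.Lex.toLex_lt_toLex.2 (Or.inr ⟨by omega, Prod.Lex.toLex_lt_toLex.2 (Or.inl ?_)⟩)
    rw [hB, Finset.card_insert_of_notMem hy]
    exact Nat.lt_succ_self _

end Key

section Violation

variable {ι : Type*} [DecidableEq ι] {n : ℕ} {v : Fin n → ι → ℤ}
  {A : Fin n → Finset ι} {i j : Fin n}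

theorem exists_key_lt_of_good_violation (hA : IsAllocation A) {g : ι} (hg : g ∈ A j)
    (hgi : 0 ≤ v i g) (hgj : 0 ≤ v j g)
    (h : ∑ x ∈ A i, v i x < ∑ x ∈ A j, v j x - v j g) :
    ∃ B, IsAllocation B ∧ List.Lex (· < ·) (key v A) (key v B) := by
  have hij : i ≠ j := by rintro rfl; omega
  refine ⟨moveItem A g i, isAllocation_moveItem hA g i,
    key_lt_key_of_keyEntry_lt hij (fun _ hki hkj => hA.moveItem_apply_of_ne hg i hkj hki)
      ?_ ?_ ?_⟩
  · exact keyEntry_lt_of_sum_lt (by omega)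
  · exact keyEntry_lt_of_insert (fun hgi => hij (hA.eq_of_mem hgi hg)) hgi (moveItem_self A g i)
  · apply keyEntry_lt_of_sum_lt
    rwa [moveItem_of_ne A g i hij.symm, Finset.sum_erase_eq_sub hg]

theorem exists_key_lt_of_chore_violation (hA : IsAllocation A) {c : ι} (hc : c ∈ A i)
    (hci : v i c < 0) (hcj : v j c = v i c)
    (h : ∑ x ∈ A i, v i x - v i c < ∑ x ∈ A j, v j x) :
    ∃ B, IsAllocation B ∧ List.Lex (· < ·) (key v A) (key v B) := by
  have hij : i ≠ j := by rintro rfl; omega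
  have hcj' : c ∉ A j := fun hcj' => hij (hA.eq_of_mem hc hcj')
  refine ⟨moveItem A c j, isAllocation_moveItem hA c j,
    key_lt_key_of_keyEntry_lt hij (fun _ hki hkj => hA.moveItem_apply_of_ne hc j hki hkj)
      ?_ ?_ ?_⟩
  · exact keyEntry_lt_of_sum_lt (by omega)
  · apply keyEntry_lt_of_sum_lt
    rw [moveItem_of_ne A c j hij, Finset.sum_erase_eq_sub hc]
    omega
  · apply keyEntry_lt_of_sum_lt
    rw [moveItem_self, Finset.sum_insert hcj']
    omega

end Violation

theorem leximinPlusPlus_maximal_is_eqx_general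
    {ι : Type*} [DecidableEq ι] {n : ℕ}
    (G C : Finset ι)
    (v : Fin n → ι → ℤ)
    (hG : ∀ g ∈ G, ∀ i : Fin n, 0 ≤ v i g)
    (hident : ∀ c ∈ C, ∀ i j : Fin n, v i c = v j c)
    (hneg : ∀ c ∈ C, ∀ i : Fin n, v i c < 0)
    (A : Fin n → Finset ι) (hA : IsAllocation A) (hnot : ¬ IsEQxObj G C v A) :
    ∃ B : Fin n → Finset ι, IsAllocation B ∧ List.Lex (· < ·) (key v A) (key v B) := by
  simp only [IsEQxObj, not_forall, not_and_or, Finset.mem_inter, not_le] at hnot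
  obtain ⟨i, j, ⟨g, ⟨hgA, hgG⟩, hlt⟩ | ⟨c, ⟨hcA, hcC⟩, hlt⟩⟩ := hnot
  · exact exists_key_lt_of_good_violation hA hgA (hG g hgG i) (hG g hgG j) hlt
  · exact exists_key_lt_of_chore_violation hA hcA (hneg c hcC i) (hident c hcC j i) hlt

/-- If all chores are identically valued and strictly negative, then any allocation that is
not EQx is dominated in the `≺⁺` order: there is an allocation with a strictly larger
leximin++ key. Consequently, every `≺⁺`-maximal allocation is EQx. -/
theorem leximinPlusPlus_maximal_is_eqx
    {ι : Type*} [Fintype ι] [DecidableEq ι] {n : ℕ} (hn : 0 < n)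
    (G C : Finset ι) (hGC : G ∪ C = Finset.univ) (hdisj : Disjoint G C)
    (v : Fin n → ι → ℤ)
    (hG : ∀ g ∈ G, ∀ i : Fin n, 0 ≤ v i g)
    (hident : ∀ c ∈ C, ∀ i j : Fin n, v i c = v j c)
    (hneg : ∀ c ∈ C, ∀ i : Fin n, v i c < 0)
    (A : Fin n → Finset ι) (hA : IsAllocation A) (hnot : ¬ IsEQxObj G C v A) :
    ∃ B : Fin n → Finset ι, IsAllocation B ∧ List.Lex (· < ·) (key v A) (key v B) :=
  leximinPlusPlus_maximal_is_eqx_general G C v hG hident hneg A hA hnot
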